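/- arXiv:2202.01730 — 2 statements merged into one kernel-verified Lean document; each statement's English description precedes it below -/
import Mathlib

section
/- (Collapsing the Markov chain.) Let f : 𝔛 → {1,2} map the symbol 1 to 1 and every other symbol to 2. For every n ≥ 1, the pushforward under the coordinatewise map (x_1,…,x_n) ↦ (f(x_1),…,f(x_n)) of the Markov row distribution on 𝔛^n with initial distribution u and transition matrix P = γI + (1−γ)U equals the Markov path distribution on {1,2}^n with initial distribution π̃ = (u_1, 1−u_1) and 2×2 transition matrix P̃ with P̃_{1,1} = γ + (1−γ)u_1, P̃_{1,2} = (1−γ)(1−u_1), P̃_{2,1} = (1−γ)u_1, P̃_{2,2} = 1 − (1−γ)u_1. -/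
open Finset

noncomputable section

/-- Probability that a single row of the database equals `x : Fin n → Fin q`,
when rows follow a first-order Markov chain over the alphabet `Fin q`
(the symbols `1, …, q` of the paper) with initial distribution `u` and
transition matrix `P`:  `u_{x_1} ∏_{t=1}^{n-1} P_{x_t, x_{t+1}}`. -/
def markovRowProb {q : ℕ} (u : Fin q → ℝ) (P : Matrix (Fin q) (Fin q) ℝ)
    {n : ℕ} (x : Fin n → Fin q) : ℝ :=
  ∏ t : Fin n,
    if (t : ℕ) = 0 then u (x t)
    else P (x ⟨(t : ℕ) - 1, Nat.lt_of_le_of_lt (Nat.sub_le _ _) t.isLt⟩) (x t)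

/-- The collapsing map: symbol `1` (index `0` of `Fin q`) goes to state `1`
(index `0` of `Fin 2`), every other symbol goes to state `2` (index `1`). -/
def collapse {q : ℕ} (x : Fin q) : Fin 2 :=
  if (x : ℕ) = 0 then 0 else 1

lemma snoc_mk_lt {m n : ℕ} (x' : Fin n → Fin m) (j : Fin m) (k : ℕ) (hk : k < n)
    (hk' : k < n + 1) :
    (Fin.snoc x' j : Fin (n + 1) → Fin m) ⟨k, hk'⟩ = x' ⟨k, hk⟩ := by
  have h : (⟨k, hk'⟩ : Fin (n + 1)) = Fin.castSucc ⟨k, hk⟩ := rfl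
  rw [h, Fin.snoc_castSucc]

lemma markovRowProb_one {m : ℕ} (v : Fin m → ℝ) (Q : Matrix (Fin m) (Fin m) ℝ)
    (x : Fin 1 → Fin m) : markovRowProb v Q x = v (x 0) := by
  simp [markovRowProb]

lemma markovRowProb_snoc {m n : ℕ} (hn : 1 ≤ n) (v : Fin m → ℝ)
    (Q : Matrix (Fin m) (Fin m) ℝ) (x' : Fin n → Fin m) (j : Fin m) :
    markovRowProb v Q (Fin.snoc x' j) =
      markovRowProb v Q x' * Q (x' ⟨n - 1, by omega⟩) j := by
  unfold markovRowProb
  rw [Fin.prod_univ_castSucc]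
  congr 1
  · refine Finset.prod_congr rfl fun t _ => ?_
    by_cases h : (t : ℕ) = 0
    · rw [if_pos (show ((t.castSucc : Fin (n + 1)) : ℕ) = 0 by simpa using h),
        if_pos h, Fin.snoc_castSucc]
    · rw [if_neg (show ¬((t.castSucc : Fin (n + 1)) : ℕ) = 0 by simpa using h),
        if_neg h, Fin.snoc_castSucc]
      congr 1
      exact snoc_mk_lt x' j ((t : ℕ) - 1) (by omega) (by omega)
  · rw [if_neg (show ¬((Fin.last n : Fin (n + 1)) : ℕ) = 0 by simp; omega),
      Fin.snoc_last]
    congr 1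
    exact snoc_mk_lt x' j (n - 1) (by omega) (by omega)

lemma collapse_eq_zero_iff {q : ℕ} (j : Fin q) : collapse j = 0 ↔ (j : ℕ) = 0 := by
  unfold collapse
  by_cases h : (j : ℕ) = 0 <;> simp [h]

lemma collapse_split {q : ℕ} (u : Fin q → ℝ) (j : Fin q) :
    (if collapse j = (0 : Fin 2) then u j else 0) +
      (if collapse j = (1 : Fin 2) then u j else 0) = u j := by
  unfold collapse
  by_cases h : (j : ℕ) = 0 <;> simp [h]

lemma sum_collapse_u {q : ℕ} (hq : 2 ≤ q) (u : Fin q → ℝ) (hu_sum : ∑ j, u j = 1)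
    (u₁ : ℝ) (i0 : Fin q) (hi0 : (i0 : ℕ) = 0) (hu₁ : u₁ = u i0) (b : Fin 2) :
    ∑ j : Fin q, (if collapse j = b then u j else 0) = ![u₁, 1 - u₁] b := by
  have key : ∑ j : Fin q, (if collapse j = (0 : Fin 2) then u j else 0) = u₁ := by
    have h : ∀ j : Fin q, (if collapse j = (0 : Fin 2) then u j else 0) =
        (if j = i0 then u j else 0) := by
      intro j
      refine if_congr ?_ rfl rfl
      rw [collapse_eq_zero_iff, Fin.ext_iff, hi0]
    rw [Finset.sum_congr rfl fun j _ => h j, Finset.sum_ite_eq' univ i0 u,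
      if_pos (mem_univ _), hu₁]
  fin_cases b
  · simpa using key
  · show (∑ j : Fin q, if collapse j = (1 : Fin 2) then u j else 0) = 1 - u₁
    have htot : ∑ j : Fin q, ((if collapse j = (0 : Fin 2) then u j else 0) +
        (if collapse j = (1 : Fin 2) then u j else 0)) = 1 := by
      rw [Finset.sum_congr rfl fun j _ => collapse_split u j, hu_sum]
    rw [Finset.sum_add_distrib, key] at htot
    linarith

lemma sum_collapse_P {q : ℕ} (hq : 2 ≤ q) (u : Fin q → ℝ) (hu_sum : ∑ j, u j = 1)
    (γ : ℝ)
    (P : Matrix (Fin q) (Fin q) ℝ)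
    (hP : P = γ • (1 : Matrix (Fin q) (Fin q) ℝ) +
      (1 - γ) • Matrix.of fun _ j => u j)
    (u₁ : ℝ) (i0 : Fin q) (hi0 : (i0 : ℕ) = 0) (hu₁ : u₁ = u i0)
    (i : Fin q) (b : Fin 2) :
    ∑ j : Fin q, (if collapse j = b then P i j else 0) =
      !![γ + (1 - γ) * u₁, (1 - γ) * (1 - u₁);
          (1 - γ) * u₁, 1 - (1 - γ) * u₁] (collapse i) b := by
  have hPij : ∀ j, P i j = γ * (if i = j then 1 else 0) + (1 - γ) * u j := by
    intro j
    rw [hP]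
    simp [Matrix.add_apply, Matrix.smul_apply, Matrix.one_apply, smul_eq_mul]
  have step1 : ∀ j : Fin q, (if collapse j = b then P i j else 0) =
      (if j = i then (if collapse i = b then γ else 0) else 0) +
        (1 - γ) * (if collapse j = b then u j else 0) := by
    intro j
    rw [hPij j]
    by_cases hji : j = i
    · subst hji
      by_cases hb : collapse j = b <;> simp [hb] <;> ring
    · have hij : ¬ i = j := fun h => hji h.symm
      by_cases hb : collapse j = b <;> simp [hb, hji, hij]
  rw [Finset.sum_congr rfl fun j _ => step1 j, Finset.sum_add_distrib,
    Finset.sum_ite_eq' univ i _, if_pos (mem_univ _), ← Finset.mul_sum,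
    sum_collapse_u hq u hu_sum u₁ i0 hi0 hu₁ b]
  generalize collapse i = a
  fin_cases a <;> fin_cases b <;>
    simp [Matrix.cons_val_zero, Matrix.cons_val_one, Matrix.head_cons] <;> ring

lemma collapse_snoc_cond {q n : ℕ} (x' : Fin n → Fin q) (j : Fin q)
    (y : Fin (n + 1) → Fin 2) :
    ((fun t => collapse ((Fin.snoc x' j : Fin (n + 1) → Fin q) t)) = y) ↔
      ((fun t => collapse (x' t)) = Fin.init y ∧ collapse j = y (Fin.last n)) := by
  constructor
  · intro h
    refine ⟨funext fun t => ?_, ?_⟩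
    · have := congrFun h t.castSucc
      simpa [Fin.snoc_castSucc, Fin.init] using this
    · have := congrFun h (Fin.last n)
      simpa using this
  · rintro ⟨h1, h2⟩
    funext t
    refine Fin.lastCases ?_ (fun i => ?_) t
    · simpa using h2
    · have := congrFun h1 i
      simpa [Fin.snoc_castSucc, Fin.init] using this

/-- **Collapsing the Markov chain.**
The pushforward of the Markov row distribution (initial distribution `u`,
transition matrix `P = γ • I + (1 − γ) • U`) under the coordinatewise collapsing
map equals the Markov path distribution on `{1,2}ⁿ` with initial distribution
`π̃ = (u₁, 1 − u₁)` and transition matrix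
`P̃ = !![γ + (1−γ)u₁, (1−γ)(1−u₁); (1−γ)u₁, 1 − (1−γ)u₁]`. -/
theorem collapsed_markov_chain
    (q : ℕ) (hq : 2 ≤ q)
    (u : Fin q → ℝ) (hu_pos : ∀ j, 0 < u j) (hu_sum : ∑ j, u j = 1)
    (γ : ℝ) (hγ_lb : ∀ j, -(u j / (1 - u j)) < γ) (hγ_ub : γ < 1)
    (P : Matrix (Fin q) (Fin q) ℝ)
    (hP : P = γ • (1 : Matrix (Fin q) (Fin q) ℝ) +
      (1 - γ) • Matrix.of fun _ j => u j)
    (u₁ : ℝ) (hu₁ : u₁ = u ⟨0, by omega⟩)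
    (n : ℕ) (hn : 1 ≤ n) (y : Fin n → Fin 2) :
    ∑ x ∈ Finset.univ.filter
        (fun x : Fin n → Fin q => (fun t => collapse (x t)) = y),
      markovRowProb u P x =
    markovRowProb (![u₁, 1 - u₁])
      (!![γ + (1 - γ) * u₁, (1 - γ) * (1 - u₁);
          (1 - γ) * u₁, 1 - (1 - γ) * u₁]) y := by
  induction n, hn using Nat.le_induction with
  | base =>
    rw [Finset.sum_filter, markovRowProb_one,
      ← Equiv.sum_comp (Equiv.funUnique (Fin 1) (Fin q)).symm,
      ← sum_collapse_u hq u hu_sum u₁ ⟨0, by omega⟩ rfl hu₁ (y 0)]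
    refine Finset.sum_congr rfl fun j _ => ?_
    rw [show ((Equiv.funUnique (Fin 1) (Fin q)).symm j) = (fun _ => j) from rfl,
      markovRowProb_one]
    refine if_congr ?_ rfl rfl
    constructor
    · intro h; exact congrFun h 0
    · intro h; funext t; rw [Subsingleton.elim t 0]; exact h
  | succ n hn IH =>
    rw [Finset.sum_filter,
      ← Equiv.sum_comp (Fin.snocEquiv (fun _ => Fin q)),
      Fintype.sum_prod_type, Finset.sum_comm,
      show y = Fin.snoc (Fin.init y) (y (Fin.last n)) from (Fin.snoc_init_self y).symm,
      markovRowProb_snoc hn, Fin.snoc_init_self, ← IH (Fin.init y),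
      Finset.sum_filter, Finset.sum_mul]
    refine Finset.sum_congr rfl fun x' _ => ?_
    by_cases hc1 : (fun t => collapse (x' t)) = Fin.init y
    · rw [if_pos hc1]
      have hterm : ∀ j : Fin q,
          (if (fun t => collapse ((Fin.snocEquiv (fun _ => Fin q)) (j, x') t)) =
              y then
            markovRowProb u P ((Fin.snocEquiv (fun _ => Fin q)) (j, x')) else 0) =
          markovRowProb u P x' *
            (if collapse j = y (Fin.last n) then
              P (x' ⟨n - 1, by omega⟩) j else 0) := by
        intro j
        have he : (Fin.snocEquiv (fun _ => Fin q)) (j, x') =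
            (Fin.snoc x' j : Fin (n + 1) → Fin q) := by
          funext t; exact Fin.snocEquiv_apply _ _ _
        rw [he, markovRowProb_snoc hn]
        by_cases hj : collapse j = y (Fin.last n)
        · rw [if_pos ((collapse_snoc_cond x' j y).mpr ⟨hc1, hj⟩), if_pos hj]
        · rw [if_neg (fun h => hj ((collapse_snoc_cond x' j y).mp h).2),
            if_neg hj, mul_zero]
      rw [Finset.sum_congr rfl fun j _ => hterm j, ← Finset.mul_sum,
        sum_collapse_P hq u hu_sum γ P hP u₁ ⟨0, by omega⟩ rfl hu₁ _ (y (Fin.last n))]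
      have hcol : collapse (x' ⟨n - 1, by omega⟩) = Fin.init y ⟨n - 1, by omega⟩ :=
        congrFun hc1 ⟨n - 1, by omega⟩
      rw [hcol]
    · rw [if_neg hc1, zero_mul]
      refine Finset.sum_eq_zero fun j _ => ?_
      rw [if_neg]
      intro h
      have he : (Fin.snocEquiv (fun _ => Fin q)) (j, x') =
          (Fin.snoc x' j : Fin (n + 1) → Fin q) := by
        funext t; exact Fin.snocEquiv_apply _ _ _
      rw [he] at h
      exact hc1 ((collapse_snoc_cond x' j y).mp h).1

end
end

section
/- For all integers m, r with 0 < r < m and every p ∈ (0,1), the binomial probability satisfies C(m,r) p^r (1−p)^{m−r} ≤ (e/√(2π)) · √( m / (r(m−r)) ) · 2^{−m D(r/m ∥ p)}, where D(a ∥ p) = a log₂(a/p) + (1−a) log₂((1−a)/(1−p)) is the binary Kullback–Leibler divergence in bits. -/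
open Real Nat

private lemma sqrt_pi_le_stirling (k : ℕ) : Real.sqrt π ≤ Stirling.stirlingSeq (k + 1) :=
  Stirling.stirlingSeq'_antitone.le_of_tendsto
    (Stirling.tendsto_stirlingSeq_sqrt_pi.comp (Filter.tendsto_add_atTop_nat 1)) k

private lemma stirling_le (k : ℕ) : Stirling.stirlingSeq (k + 1) ≤ Real.exp 1 / Real.sqrt 2 := by
  have h := Stirling.stirlingSeq'_antitone (Nat.zero_le k)
  simpa [Stirling.stirlingSeq_one] using h

private lemma fact_eq (n : ℕ) (hn : 0 < n) :
    (n ! : ℝ) = Stirling.stirlingSeq n * (Real.sqrt (2 * n) * ((n : ℝ) / Real.exp 1) ^ n) := by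
  have hn' : (0:ℝ) < n := by exact_mod_cast hn
  rw [Stirling.stirlingSeq]
  field_simp

private lemma fact_upper (n : ℕ) (hn : 0 < n) :
    (n ! : ℝ) ≤ Real.exp 1 * Real.sqrt n * ((n : ℝ) / Real.exp 1) ^ n := by
  obtain ⟨k, rfl⟩ := Nat.exists_eq_add_of_lt hn
  rw [fact_eq _ hn]
  have h1 := stirling_le k
  have h2 : Real.sqrt (2 * (0 + k + 1 : ℕ)) = Real.sqrt 2 * Real.sqrt ((0 + k + 1 : ℕ) : ℝ) :=
    Real.sqrt_mul (by norm_num) _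
  have hpos : (0:ℝ) < Real.sqrt 2 := by positivity
  calc Stirling.stirlingSeq (0 + k + 1) * (Real.sqrt (2 * (0 + k + 1 : ℕ)) * (((0 + k + 1 : ℕ) : ℝ) / Real.exp 1) ^ (0 + k + 1))
      ≤ (Real.exp 1 / Real.sqrt 2) * (Real.sqrt (2 * (0 + k + 1 : ℕ)) * (((0 + k + 1 : ℕ) : ℝ) / Real.exp 1) ^ (0 + k + 1)) := by
        apply mul_le_mul_of_nonneg_right _ (by positivity)
        simpa using h1
    _ = Real.exp 1 * Real.sqrt ((0 + k + 1 : ℕ) : ℝ) * (((0 + k + 1 : ℕ) : ℝ) / Real.exp 1) ^ (0 + k + 1) := by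
        rw [h2]; field_simp

private lemma fact_lower (n : ℕ) (hn : 0 < n) :
    Real.sqrt (2 * π) * Real.sqrt n * ((n : ℝ) / Real.exp 1) ^ n ≤ (n ! : ℝ) := by
  obtain ⟨k, rfl⟩ := Nat.exists_eq_add_of_lt hn
  rw [fact_eq _ hn]
  have h1 := sqrt_pi_le_stirling k
  have h2 : Real.sqrt (2 * (0 + k + 1 : ℕ)) = Real.sqrt 2 * Real.sqrt ((0 + k + 1 : ℕ) : ℝ) :=
    Real.sqrt_mul (by norm_num) _
  have h3 : Real.sqrt (2 * π) = Real.sqrt 2 * Real.sqrt π := Real.sqrt_mul (by norm_num) _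
  calc Real.sqrt (2 * π) * Real.sqrt ((0 + k + 1 : ℕ) : ℝ) * (((0 + k + 1 : ℕ) : ℝ) / Real.exp 1) ^ (0 + k + 1)
      = Real.sqrt π * (Real.sqrt (2 * (0 + k + 1 : ℕ)) * (((0 + k + 1 : ℕ) : ℝ) / Real.exp 1) ^ (0 + k + 1)) := by
        rw [h2, h3]; ring
    _ ≤ _ := by
        apply mul_le_mul_of_nonneg_right _ (by positivity)
        simpa using h1

/-- **Stirling-type bound on binomial probabilities.**
For `0 < r < m` and `p ∈ (0,1)`,
`C(m,r) p^r (1-p)^(m-r) ≤ (e/√(2π)) √(m/(r(m-r))) 2^(−m D(r/m ∥ p))`,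
where `D(a ∥ p)` is the binary Kullback–Leibler divergence in bits. -/
theorem binomial_probability_stirling_bound
    (m r : ℕ) (hr : 0 < r) (hrm : r < m) (p : ℝ) (hp0 : 0 < p) (hp1 : p < 1) :
    (m.choose r : ℝ) * p ^ r * (1 - p) ^ (m - r) ≤
      (Real.exp 1 / Real.sqrt (2 * Real.pi)) *
        Real.sqrt ((m : ℝ) / ((r : ℝ) * ((m : ℝ) - (r : ℝ)))) *
        (2 : ℝ) ^ (-(m : ℝ) *
          (((r : ℝ) / m) * Real.logb 2 (((r : ℝ) / m) / p) +
            (1 - (r : ℝ) / m) * Real.logb 2 ((1 - (r : ℝ) / m) / (1 - p)))) := by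
  have hm : 0 < m := hr.trans hrm
  set b := m - r with hb
  have hb0 : 0 < b := Nat.sub_pos_of_lt hrm
  have hab : r + b = m := Nat.add_sub_cancel' hrm.le
  have hA : (0:ℝ) < r := by exact_mod_cast hr
  have hB : (0:ℝ) < b := by exact_mod_cast hb0
  have hM : (0:ℝ) < m := by exact_mod_cast hm
  have hMA : (m:ℝ) - (r:ℝ) = (b:ℝ) := by
    rw [hb, Nat.cast_sub hrm.le]
  have hq : 0 < 1 - p := by linarith
  rw [hMA]
  -- identify the rpow factor
  have h1 : 1 - (r:ℝ)/m = (b:ℝ)/m := by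
    field_simp
    linarith [hMA]
  have hE : (2 : ℝ) ^ (-(m : ℝ) *
          (((r : ℝ) / m) * Real.logb 2 (((r : ℝ) / m) / p) +
            (1 - (r : ℝ) / m) * Real.logb 2 ((1 - (r : ℝ) / m) / (1 - p))))
      = ((m:ℝ) * p / r) ^ r * ((m:ℝ) * (1 - p) / b) ^ b := by
    rw [h1]
    have e1 : -(m : ℝ) *
          (((r : ℝ) / m) * Real.logb 2 (((r : ℝ) / m) / p) +
            ((b:ℝ)/m) * Real.logb 2 (((b:ℝ)/m) / (1 - p)))
        = Real.logb 2 ((m:ℝ) * p / r) * (r:ℝ) + Real.logb 2 ((m:ℝ) * (1 - p) / b) * (b:ℝ) := by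
      rw [show ((m:ℝ) * p / r) = (((r:ℝ)/m)/p)⁻¹ by field_simp,
        show ((m:ℝ) * (1 - p) / b) = (((b:ℝ)/m)/(1-p))⁻¹ by field_simp,
        Real.logb_inv, Real.logb_inv]
      field_simp
      ring
    rw [e1, Real.rpow_add two_pos,
      Real.rpow_mul (by norm_num : (0:ℝ) ≤ 2), Real.rpow_mul (by norm_num : (0:ℝ) ≤ 2),
      Real.rpow_logb two_pos (by norm_num) (by positivity),
      Real.rpow_logb two_pos (by norm_num) (by positivity),
      Real.rpow_natCast, Real.rpow_natCast]
  rw [hE]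
  -- Stirling bound on the binomial coefficient
  have hfM := fact_upper m hm
  have hfA := fact_lower r hr
  have hfB := fact_lower b hb0
  have hC : (m.choose r : ℝ) ≤ (Real.exp 1 * Real.sqrt m * ((m:ℝ)/Real.exp 1) ^ m) /
      ((Real.sqrt (2*π) * Real.sqrt r * ((r:ℝ)/Real.exp 1) ^ r) *
       (Real.sqrt (2*π) * Real.sqrt b * ((b:ℝ)/Real.exp 1) ^ b)) := by
    rw [Nat.cast_choose ℝ hrm.le]
    rw [← hb]
    exact div_le_div₀ (by positivity) hfM (by positivity)
      (mul_le_mul hfA hfB (by positivity) (Nat.cast_nonneg _))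
  set sp := Real.sqrt (2*π) with hsp
  have hsp1 : 1 ≤ sp := by
    rw [hsp, show (1:ℝ) = Real.sqrt 1 by simp]
    exact Real.sqrt_le_sqrt (by nlinarith [Real.pi_gt_three])
  have hspos : (0:ℝ) < sp := lt_of_lt_of_le one_pos hsp1
  have hexp : Real.exp 1 ≠ 0 := (Real.exp_pos 1).ne'
  have hsA : (0:ℝ) < Real.sqrt r := Real.sqrt_pos.2 hA
  have hsB : (0:ℝ) < Real.sqrt b := Real.sqrt_pos.2 hB
  have hEq : (Real.exp 1 * Real.sqrt m * ((m:ℝ)/Real.exp 1) ^ m) /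
      ((sp * Real.sqrt r * ((r:ℝ)/Real.exp 1) ^ r) *
       (sp * Real.sqrt b * ((b:ℝ)/Real.exp 1) ^ b))
      = (Real.exp 1/(sp*sp)) * (Real.sqrt m/(Real.sqrt r * Real.sqrt b)) *
        (((m:ℝ)/r)^r * ((m:ℝ)/b)^b) := by
    rw [← hab, pow_add]
    field_simp
    have hr' : (r:ℝ)^r * ((r:ℝ)⁻¹)^r = 1 := by rw [← mul_pow, mul_inv_cancel₀ hA.ne', one_pow]
    have hb' : (b:ℝ)^b * ((b:ℝ)⁻¹)^b = 1 := by rw [← mul_pow, mul_inv_cancel₀ hB.ne', one_pow]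
    linear_combination (-(((r + b : ℕ) : ℝ) ^ r * ((r + b : ℕ) : ℝ) ^ b * (Real.exp 1)⁻¹ ^ r * (Real.exp 1)⁻¹ ^ b)) * hr' - (((r + b : ℕ) : ℝ) ^ r * ((r + b : ℕ) : ℝ) ^ b * (Real.exp 1)⁻¹ ^ r * (Real.exp 1)⁻¹ ^ b) * (r:ℝ)^r * ((r:ℝ)⁻¹)^r * hb'
  have hQle : (Real.exp 1 * Real.sqrt m * ((m:ℝ)/Real.exp 1) ^ m) /
      ((sp * Real.sqrt r * ((r:ℝ)/Real.exp 1) ^ r) *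
       (sp * Real.sqrt b * ((b:ℝ)/Real.exp 1) ^ b))
      ≤ (Real.exp 1/sp) * (Real.sqrt m/(Real.sqrt r * Real.sqrt b)) *
        (((m:ℝ)/r)^r * ((m:ℝ)/b)^b) := by
    rw [hEq]
    apply mul_le_mul_of_nonneg_right _ (by positivity)
    apply mul_le_mul_of_nonneg_right _ (by positivity)
    rw [div_le_div_iff₀ (by positivity) (by positivity)]
    nlinarith [mul_nonneg (mul_nonneg (Real.exp_pos 1).le hspos.le) (sub_nonneg.2 hsp1)]
  have hsqrt : Real.sqrt ((m:ℝ) / ((r:ℝ) * (b:ℝ)))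
      = Real.sqrt m / (Real.sqrt r * Real.sqrt b) := by
    rw [Real.sqrt_div hM.le, Real.sqrt_mul hA.le]
  calc (m.choose r : ℝ) * p ^ r * (1 - p) ^ b
      = (m.choose r : ℝ) * (p ^ r * (1 - p) ^ b) := by ring
    _ ≤ ((Real.exp 1 * Real.sqrt m * ((m:ℝ)/Real.exp 1) ^ m) /
      ((sp * Real.sqrt r * ((r:ℝ)/Real.exp 1) ^ r) *
       (sp * Real.sqrt b * ((b:ℝ)/Real.exp 1) ^ b))) * (p ^ r * (1 - p) ^ b) :=
        mul_le_mul_of_nonneg_right hC (by positivity)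
    _ ≤ ((Real.exp 1/sp) * (Real.sqrt m/(Real.sqrt r * Real.sqrt b)) *
        (((m:ℝ)/r)^r * ((m:ℝ)/b)^b)) * (p ^ r * (1 - p) ^ b) :=
        mul_le_mul_of_nonneg_right hQle (by positivity)
    _ = Real.exp 1 / sp * Real.sqrt ((m:ℝ) / ((r:ℝ) * (b:ℝ))) *
        (((m:ℝ) * p / r) ^ r * ((m:ℝ) * (1 - p) / b) ^ b) := by
        rw [hsqrt, show ((m:ℝ) * p / r) = ((m:ℝ)/r) * p by ring,
          show ((m:ℝ) * (1 - p) / b) = ((m:ℝ)/b) * (1-p) by ring, mul_pow, mul_pow]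
        ring
end
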